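/- Let R, S, ψ be a numerical solution of the semi-discrete energy-dissipative DG scheme for the Riemann-invariant (RS) formulation with periodic boundary conditions; that is, for every t ∈ [0,T] and all test functions φ, η, ζ ∈ X^p_Δx(Ω), equations (i)–(iii) hold, where (i) is the conservative R-equation modified by replacing the interface flux c̄_{j±1/2}·R̄_{j±1/2} on the left-hand side by the diffusive flux c̄_{j±1/2}·R̄_{j±1/2} + (1/2)s_{j±1/2}·⟦R⟧_{j±1/2} and subtracting the shock-capturing term Σ_{j=1}^N ε_j ∫_{Ω_j} ∂_xR·∂_xφ dx from the right-hand side; (ii) is the conservative S-equation modified by replacing the interface flux c̄_{j±1/2}·S̄_{j±1/2} on the left-hand side by c̄_{j±1/2}·S̄_{j±1/2} − (1/2)s_{j±1/2}·⟦S⟧_{j±1/2} and subtracting Σ_{j=1}^N ε_j ∫_{Ω_j} ∂_xS·∂_xη dx from the right-hand side; and (iii) is Σ_{j=1}^N ∫_{Ω_j} ∂_tψ·ζ dx = Σ_{j=1}^N ∫_{Ω_j} ((R+S)/2)·ζ dx. Here s_{j+1/2}(t) = max{ c(ψ⁻_{j+1/2}(t)), c(ψ⁺_{j+1/2}(t))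 } ≥ 0 and ε_j(t) ≥ 0 are the nonnegative shock-capturing coefficients. Then the discrete energy t ↦ Σ_{j=1}^N ∫_{Ω_j} (R(t,x)² + S(t,x)²)/2 dx is non-increasing: its time derivative satisfies d/dt Σ_{j=1}^N ∫_{Ω_j} (R² + S²)/2 dx = −(1/2) Σ_{j=1}^N s_{j+1/2}( ⟦R⟧²_{j+1/2} + ⟦S⟧²_{j+1/2} ) − Σ_{j=1}^N ε_j ∫_{Ω_j} ((∂_xR)² + (∂_xS)²) dx ≤ 0 for every t ∈ [0,T]. -/

import Mathlib

/-!
Test equation (i) with `φ = R` and equation (ii) with `η = S` (admissible, since `R(t)` and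
`S(t)` lie in `X^p_Δx`) and add the two. In the volume terms `∫ c R R_x = ½ ∫ c (R²)_x`, so
the advective terms cancel, and the cross terms `∓½ ∫ c (RS)_x` of the two equations cancel
each other. After periodic reindexing every interface contributes
`-c̄ R̄ ⟦R⟧ + ½ c̄ ⟦R²⟧ = 0` through the central part of the flux and `-½ s ⟦R⟧²` through its
diffusive part (likewise for `S`, the cross traces `c̄ ⟦RS⟧` again cancelling). Differentiating
the energy under the integral sign identifies the sum of the left-hand sides with its time
derivative, and `s, ε ≥ 0` give the sign.
-/

open Finset

noncomputable section

/-- The wave speed `c(u) = √(α cos²u + β sin²u)`. -/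
def waveC (α β u : ℝ) : ℝ :=
  Real.sqrt (α * Real.cos u ^ 2 + β * Real.sin u ^ 2)

/-- Left endpoint `x_{j-1/2}` of cell `Ω_j`. -/
def cellL {N : ℕ} (x : Fin (N + 1) → ℝ) (j : Fin N) : ℝ := x j.castSucc

/-- Right endpoint `x_{j+1/2}` of cell `Ω_j`. -/
def cellR {N : ℕ} (x : Fin (N + 1) → ℝ) (j : Fin N) : ℝ := x j.succ

/-- Minus (left) trace `u⁻_{j+1/2}` of the grid function `u` at the interface
to the right of cell `j`, at time `t`. -/
def trM {N : ℕ} (x : Fin (N + 1) → ℝ) (u : Fin N → ℝ → ℝ → ℝ) (t : ℝ) (j : Fin N) : ℝ :=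
  u j t (cellR x j)

/-- Plus (right) trace `u⁺_{j+1/2}` at the interface to the right of cell `j`
(cell indices are periodic: the cell to the right of cell `j` is `j + 1` in `Fin N`). -/
def trP {N : ℕ} [NeZero N] (x : Fin (N + 1) → ℝ) (u : Fin N → ℝ → ℝ → ℝ) (t : ℝ) (j : Fin N) : ℝ :=
  u (j + 1) t (cellL x (j + 1))

/-- Interface average `ū_{j+1/2} = (u⁺ + u⁻)/2`. -/
def avgI {N : ℕ} [NeZero N] (x : Fin (N + 1) → ℝ) (u : Fin N → ℝ → ℝ → ℝ) (t : ℝ) (j : Fin N) : ℝ :=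
  (trP x u t j + trM x u t j) / 2

/-- Interface jump `⟦u⟧_{j+1/2} = u⁺ − u⁻`. -/
def jmpI {N : ℕ} [NeZero N] (x : Fin (N + 1) → ℝ) (u : Fin N → ℝ → ℝ → ℝ) (t : ℝ) (j : Fin N) : ℝ :=
  trP x u t j - trM x u t j

/-- Averaged interface wave speed `c̄_{j+1/2} = (c(ψ⁺) + c(ψ⁻))/2`. -/
def cbarI {N : ℕ} [NeZero N] (α β : ℝ) (x : Fin (N + 1) → ℝ)
    (ψ : Fin N → ℝ → ℝ → ℝ) (t : ℝ) (j : Fin N) : ℝ :=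
  (waveC α β (trP x ψ t j) + waveC α β (trM x ψ t j)) / 2

/-- Maximal local wave velocity `s_{j+1/2} = max{c(ψ⁻), c(ψ⁺)}`. -/
def sMaxI {N : ℕ} [NeZero N] (α β : ℝ) (x : Fin (N + 1) → ℝ)
    (ψ : Fin N → ℝ → ℝ → ℝ) (t : ℝ) (j : Fin N) : ℝ :=
  max (waveC α β (trM x ψ t j)) (waveC α β (trP x ψ t j))

/-- `f : ℝ → ℝ` is (the cell restriction of) a polynomial of degree `≤ p`,
i.e. the cell belongs to the space `X^p_Δx`. -/
def IsPolyDeg (p : ℕ) (f : ℝ → ℝ) : Prop :=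
  ∃ q : Polynomial ℝ, q.natDegree ≤ p ∧ ∀ y : ℝ, f y = q.eval y

section Leibniz

variable {E : Type*} [NormedAddCommGroup E] [NormedSpace ℝ E] {F : ℝ → ℝ → E}

theorem ContDiff.hasDerivAt_uncurry_fst (hF : ContDiff ℝ 1 (Function.uncurry F)) (s y : ℝ) :
    HasDerivAt (fun s => F s y) (fderiv ℝ (Function.uncurry F) (s, y) (1, 0)) s :=
  (hF.differentiable one_ne_zero (s, y)).hasFDerivAt.comp_hasDerivAt (f := fun s => (s, y)) s
    ((hasDerivAt_id s).prodMk (hasDerivAt_const s y))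

theorem ContDiff.continuous_deriv_uncurry_fst (hF : ContDiff ℝ 1 (Function.uncurry F)) (t : ℝ) :
    Continuous fun y => deriv (fun s => F s y) t := by
  simp only [fun y => (hF.hasDerivAt_uncurry_fst t y).deriv]
  exact ((hF.continuous_fderiv one_ne_zero).clm_apply continuous_const).comp
    (continuous_const.prodMk continuous_id)

theorem hasDerivAt_intervalIntegral_of_contDiff (hF : ContDiff ℝ 1 (Function.uncurry F))
    (a b t : ℝ) :
    HasDerivAt (fun s => ∫ y in a..b, F s y) (∫ y in a..b, deriv (fun s => F s y) t) t := by
  set F' : ℝ → ℝ → E := fun s y => fderiv ℝ (Function.uncurry F) (s, y) (1, 0)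
  have hF'_cont : Continuous (Function.uncurry F') :=
    (hF.continuous_fderiv one_ne_zero).clm_apply continuous_const
  have hF_cont : ∀ s, Continuous (F s) := fun s =>
    hF.continuous.comp (continuous_const.prodMk continuous_id)
  obtain ⟨C, hC⟩ := ((isCompact_closedBall t 1).prod (isCompact_uIcc (a := a) (b := b)))
    |>.exists_bound_of_continuousOn hF'_cont.continuousOn
  have key := intervalIntegral.hasDerivAt_integral_of_dominated_loc_of_deriv_le
    (μ := MeasureTheory.volume) (F := F) (F' := F') (bound := fun _ => C)
    (Metric.ball_mem_nhds t one_pos)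
    (.of_forall fun s => (hF_cont s).aestronglyMeasurable) ((hF_cont t).intervalIntegrable a b)
    (hF'_cont.comp (continuous_const.prodMk continuous_id)).aestronglyMeasurable
    (.of_forall fun y hy s hs =>
      hC (s, y) ⟨Metric.ball_subset_closedBall hs, Set.uIoc_subset_uIcc hy⟩)
    intervalIntegrable_const
    (.of_forall fun y _ s _ => hF.hasDerivAt_uncurry_fst s y)
  exact key.2.congr_deriv <| intervalIntegral.integral_congr fun y _ =>
    (hF.hasDerivAt_uncurry_fst t y).deriv.symm

theorem ContDiff.apply_of_uncurry {n : WithTop ℕ∞} (hF : ContDiff ℝ n (Function.uncurry F))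
    (t : ℝ) : ContDiff ℝ n (F t) :=
  hF.comp (contDiff_const.prodMk contDiff_id)

end Leibniz

theorem hasDerivAt_intervalIntegral_half_sq_add_sq {u v : ℝ → ℝ → ℝ}
    (hu : ContDiff ℝ 1 (Function.uncurry u)) (hv : ContDiff ℝ 1 (Function.uncurry v))
    (a b t : ℝ) :
    HasDerivAt (fun s => ∫ y in a..b, (u s y ^ 2 + v s y ^ 2) / 2)
      ((∫ y in a..b, deriv (fun s => u s y) t * u t y)
        + ∫ y in a..b, deriv (fun s => v s y) t * v t y) t := by
  have henergy := hasDerivAt_intervalIntegral_of_contDiff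
    (F := fun s y => (u s y ^ 2 + v s y ^ 2) / 2) (((hu.pow 2).add (hv.pow 2)).div_const 2) a b t
  have hdensity : ∀ y, deriv (fun s => u s y) t * u t y + deriv (fun s => v s y) t * v t y
      = deriv (fun s => (u s y ^ 2 + v s y ^ 2) / 2) t := fun y => by
    have hu_t := (hu.hasDerivAt_uncurry_fst t y).differentiableAt.hasDerivAt
    have hv_t := (hv.hasDerivAt_uncurry_fst t y).differentiableAt.hasDerivAt
    have h : HasDerivAt (fun s => (u s y ^ 2 + v s y ^ 2) / 2) _ t :=
      ((hu_t.pow 2).add (hv_t.pow 2)).div_const 2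
    rw [h.deriv]
    push_cast
    ring
  have hsplit : ((∫ y in a..b, deriv (fun s => u s y) t * u t y)
      + ∫ y in a..b, deriv (fun s => v s y) t * v t y)
      = ∫ y in a..b, deriv (fun s => (u s y ^ 2 + v s y ^ 2) / 2) t := by
    have hu_cont := (hu.continuous_deriv_uncurry_fst t).fun_mul (hu.apply_of_uncurry t).continuous
    have hv_cont := (hv.continuous_deriv_uncurry_fst t).fun_mul (hv.apply_of_uncurry t).continuous
    rw [← intervalIntegral.integral_add (hu_cont.intervalIntegrable _ _)
      (hv_cont.intervalIntegrable _ _)]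
    exact intervalIntegral.integral_congr fun y _ => hdensity y
  rwa [hsplit]

theorem intervalIntegral_mul_deriv_mul_self {u : ℝ → ℝ} (hu : Differentiable ℝ u) (w : ℝ → ℝ)
    (a b : ℝ) :
    ∫ y in a..b, w y * deriv (fun z => u z * u z) y
      = 2 * ∫ y in a..b, w y * u y * deriv (fun z => u z) y := by
  rw [← intervalIntegral.integral_const_mul]
  refine intervalIntegral.integral_congr fun y _ => ?_
  simp only [deriv_fun_mul (hu y) (hu y)]
  ring

theorem IsPolyDeg.exists_eval_eq {ι : Type*} {p : ℕ} {u : ι → ℝ → ℝ}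
    (hu : ∀ j, IsPolyDeg p (u j)) :
    ∃ q : ι → Polynomial ℝ, (∀ j, (q j).natDegree ≤ p) ∧ (fun j z => (q j).eval z) = u := by
  choose q hq_deg hq_eval using hu
  exact ⟨q, hq_deg, funext fun j => funext fun z => (hq_eval j z).symm⟩

section Scheme

variable {N : ℕ} [NeZero N] (α β : ℝ) (x : Fin (N + 1) → ℝ)

def diffFluxR (ψ R : Fin N → ℝ → ℝ → ℝ) (t : ℝ) (j : Fin N) : ℝ :=
  cbarI α β x ψ t j * avgI x R t j + (1 / 2) * sMaxI α β x ψ t j * jmpI x R t j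

def diffFluxS (ψ S : Fin N → ℝ → ℝ → ℝ) (t : ℝ) (j : Fin N) : ℝ :=
  cbarI α β x ψ t j * avgI x S t j - (1 / 2) * sMaxI α β x ψ t j * jmpI x S t j

/-- Equation (i) of the scheme at time `t`, tested against the cellwise functions `φ j`. -/
def SchemeEqR (R S ψ : Fin N → ℝ → ℝ → ℝ) (ε : Fin N → ℝ → ℝ) (t : ℝ)
    (φ : Fin N → ℝ → ℝ) : Prop :=
  (∑ j : Fin N, ∫ y in cellL x j..cellR x j, deriv (fun s => R j s y) t * φ j y)
    + (∑ j : Fin N, ∫ y in cellL x j..cellR x j,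
        waveC α β (ψ j t y) * R j t y * deriv (fun z => φ j z) y)
    - (∑ j : Fin N, diffFluxR α β x ψ R t j * φ j (cellR x j))
    + (∑ j : Fin N, diffFluxR α β x ψ R t (j - 1) * φ j (cellL x j))
  = (1 / 2) * (∑ j : Fin N, ∫ y in cellL x j..cellR x j,
        waveC α β (ψ j t y) * deriv (fun z => R j t z * φ j z) y)
    - (1 / 2) * (∑ j : Fin N, cbarI α β x ψ t j * trM x R t j * φ j (cellR x j))
    + (1 / 2) * (∑ j : Fin N, cbarI α β x ψ t (j - 1) * trP x R t (j - 1) * φ j (cellL x j))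
    - (1 / 2) * (∑ j : Fin N, ∫ y in cellL x j..cellR x j,
        waveC α β (ψ j t y) * deriv (fun z => S j t z * φ j z) y)
    + (1 / 2) * (∑ j : Fin N, cbarI α β x ψ t j * trM x S t j * φ j (cellR x j))
    - (1 / 2) * (∑ j : Fin N, cbarI α β x ψ t (j - 1) * trP x S t (j - 1) * φ j (cellL x j))
    - (∑ j : Fin N, ε j t * ∫ y in cellL x j..cellR x j,
        deriv (fun z => R j t z) y * deriv (fun z => φ j z) y)

/-- Equation (ii) of the scheme at time `t`, tested against the cellwise functions `η j`. -/
def SchemeEqS (R S ψ : Fin N → ℝ → ℝ → ℝ) (ε : Fin N → ℝ → ℝ) (t : ℝ)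
    (η : Fin N → ℝ → ℝ) : Prop :=
  (∑ j : Fin N, ∫ y in cellL x j..cellR x j, deriv (fun s => S j s y) t * η j y)
    - (∑ j : Fin N, ∫ y in cellL x j..cellR x j,
        waveC α β (ψ j t y) * S j t y * deriv (fun z => η j z) y)
    + (∑ j : Fin N, diffFluxS α β x ψ S t j * η j (cellR x j))
    - (∑ j : Fin N, diffFluxS α β x ψ S t (j - 1) * η j (cellL x j))
  = (1 / 2) * (∑ j : Fin N, ∫ y in cellL x j..cellR x j,
        waveC α β (ψ j t y) * deriv (fun z => R j t z * η j z) y)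
    - (1 / 2) * (∑ j : Fin N, cbarI α β x ψ t j * trM x R t j * η j (cellR x j))
    + (1 / 2) * (∑ j : Fin N, cbarI α β x ψ t (j - 1) * trP x R t (j - 1) * η j (cellL x j))
    - (1 / 2) * (∑ j : Fin N, ∫ y in cellL x j..cellR x j,
        waveC α β (ψ j t y) * deriv (fun z => S j t z * η j z) y)
    + (1 / 2) * (∑ j : Fin N, cbarI α β x ψ t j * trM x S t j * η j (cellR x j))
    - (1 / 2) * (∑ j : Fin N, cbarI α β x ψ t (j - 1) * trP x S t (j - 1) * η j (cellL x j))
    - (∑ j : Fin N, ε j t * ∫ y in cellL x j..cellR x j,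
        deriv (fun z => S j t z) y * deriv (fun z => η j z) y)

variable {α β x}

theorem sum_sub_one_mul_cellL (u : Fin N → ℝ → ℝ → ℝ) (t : ℝ) (g : Fin N → ℝ) :
    ∑ j, g (j - 1) * u j t (cellL x j) = ∑ j, g j * trP x u t j := by
  refine Fintype.sum_equiv (Equiv.subRight 1) _ _ fun j => ?_
  simp [trP]

variable {R S ψ : Fin N → ℝ → ℝ → ℝ} {ε : Fin N → ℝ → ℝ} {t : ℝ}

theorem SchemeEqR.energy_identity (h : SchemeEqR α β x R S ψ ε t fun j => R j t)
    (hR : ∀ j, Differentiable ℝ (R j t)) :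
    ∑ j, ∫ y in cellL x j..cellR x j, deriv (fun s => R j s y) t * R j t y
      = -(1 / 2) * (∑ j, sMaxI α β x ψ t j * jmpI x R t j ^ 2)
        - (1 / 2) * (∑ j, cbarI α β x ψ t j
            * (trP x S t j * trP x R t j - trM x S t j * trM x R t j))
        - (1 / 2) * (∑ j, ∫ y in cellL x j..cellR x j,
            waveC α β (ψ j t y) * deriv (fun z => S j t z * R j t z) y)
        - ∑ j, ε j t * ∫ y in cellL x j..cellR x j,
            deriv (fun z => R j t z) y * deriv (fun z => R j t z) y := by
  have hvol := fun j => intervalIntegral_mul_deriv_mul_self (hR j)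
    (fun y => waveC α β (ψ j t y)) (cellL x j) (cellR x j)
  simp only [SchemeEqR, hvol] at h
  rw [sum_sub_one_mul_cellL R t (diffFluxR α β x ψ R t),
    sum_sub_one_mul_cellL R t fun j => cbarI α β x ψ t j * trP x R t j,
    sum_sub_one_mul_cellL R t fun j => cbarI α β x ψ t j * trP x S t j] at h
  -- every sum now runs over the interfaces `x_{j+1/2}`, so the identity holds termwise
  linear_combination (norm := skip) h
  simp only [mul_sum, ← sum_sub_distrib, ← sum_add_distrib]
  refine sum_eq_zero fun j _ => ?_
  simp only [diffFluxR, avgI, jmpI, trM]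
  ring

theorem SchemeEqS.energy_identity (h : SchemeEqS α β x R S ψ ε t fun j => S j t)
    (hS : ∀ j, Differentiable ℝ (S j t)) :
    ∑ j, ∫ y in cellL x j..cellR x j, deriv (fun s => S j s y) t * S j t y
      = -(1 / 2) * (∑ j, sMaxI α β x ψ t j * jmpI x S t j ^ 2)
        + (1 / 2) * (∑ j, cbarI α β x ψ t j
            * (trP x S t j * trP x R t j - trM x S t j * trM x R t j))
        + (1 / 2) * (∑ j, ∫ y in cellL x j..cellR x j,
            waveC α β (ψ j t y) * deriv (fun z => S j t z * R j t z) y)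
        - ∑ j, ε j t * ∫ y in cellL x j..cellR x j,
            deriv (fun z => S j t z) y * deriv (fun z => S j t z) y := by
  have hvol := fun j => intervalIntegral_mul_deriv_mul_self (hS j)
    (fun y => waveC α β (ψ j t y)) (cellL x j) (cellR x j)
  have hcomm : ∀ j, (fun z => R j t z * S j t z) = fun z => S j t z * R j t z := fun j =>
    funext fun z => mul_comm _ _
  simp only [SchemeEqS, hvol, hcomm] at h
  rw [sum_sub_one_mul_cellL S t (diffFluxS α β x ψ S t),
    sum_sub_one_mul_cellL S t fun j => cbarI α β x ψ t j * trP x R t j,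
    sum_sub_one_mul_cellL S t fun j => cbarI α β x ψ t j * trP x S t j] at h
  linear_combination (norm := skip) h
  simp only [mul_sum, ← sum_sub_distrib, ← sum_add_distrib]
  refine sum_eq_zero fun j _ => ?_
  simp only [diffFluxS, avgI, jmpI, trM]
  ring

end Scheme

section Energy

variable {N : ℕ} [NeZero N] {α β : ℝ} {x : Fin (N + 1) → ℝ}
  {R S ψ : Fin N → ℝ → ℝ → ℝ} {ε : Fin N → ℝ → ℝ} {t : ℝ}

theorem energy_balance (hR : SchemeEqR α β x R S ψ ε t fun j => R j t)
    (hS : SchemeEqS α β x R S ψ ε t fun j => S j t)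
    (hR_reg : ∀ j, ContDiff ℝ 1 (R j t)) (hS_reg : ∀ j, ContDiff ℝ 1 (S j t)) :
    ∑ j, ((∫ y in cellL x j..cellR x j, deriv (fun s => R j s y) t * R j t y)
        + ∫ y in cellL x j..cellR x j, deriv (fun s => S j s y) t * S j t y)
      = -(1 / 2) * (∑ j, sMaxI α β x ψ t j * (jmpI x R t j ^ 2 + jmpI x S t j ^ 2))
        - ∑ j, ε j t * ∫ y in cellL x j..cellR x j,
            ((deriv (fun z => R j t z) y) ^ 2 + (deriv (fun z => S j t z) y) ^ 2) := by
  have hsplit : ∀ j, ∫ y in cellL x j..cellR x j,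
      ((deriv (fun z => R j t z) y) ^ 2 + (deriv (fun z => S j t z) y) ^ 2)
      = (∫ y in cellL x j..cellR x j, deriv (fun z => R j t z) y * deriv (fun z => R j t z) y)
        + ∫ y in cellL x j..cellR x j, deriv (fun z => S j t z) y * deriv (fun z => S j t z) y :=
    fun j => by
      have hRx := (hR_reg j).continuous_deriv le_rfl
      have hSx := (hS_reg j).continuous_deriv le_rfl
      rw [← intervalIntegral.integral_add ((hRx.fun_mul hRx).intervalIntegrable _ _)
        ((hSx.fun_mul hSx).intervalIntegrable _ _)]
      simp only [sq]
  rw [sum_add_distrib, hR.energy_identity fun j => (hR_reg j).differentiable one_ne_zero,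
    hS.energy_identity fun j => (hS_reg j).differentiable one_ne_zero, ← sub_eq_zero]
  simp only [hsplit, mul_sum, ← sum_sub_distrib, ← sum_add_distrib]
  refine sum_eq_zero fun j _ => ?_
  ring

theorem sMaxI_nonneg (j : Fin N) : 0 ≤ sMaxI α β x ψ t j :=
  (Real.sqrt_nonneg _).trans (le_max_left _ _)

theorem dissipation_nonpos (hx : StrictMono x) (hε : ∀ j, 0 ≤ ε j t) :
    -(1 / 2) * (∑ j, sMaxI α β x ψ t j * (jmpI x R t j ^ 2 + jmpI x S t j ^ 2))
      - (∑ j, ε j t * ∫ y in cellL x j..cellR x j,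
          ((deriv (fun z => R j t z) y) ^ 2 + (deriv (fun z => S j t z) y) ^ 2)) ≤ 0 := by
  have hjumps : 0 ≤ ∑ j, sMaxI α β x ψ t j * (jmpI x R t j ^ 2 + jmpI x S t j ^ 2) :=
    sum_nonneg fun j _ => mul_nonneg (sMaxI_nonneg j) (by positivity)
  have hgradients : 0 ≤ ∑ j, ε j t * ∫ y in cellL x j..cellR x j,
      ((deriv (fun z => R j t z) y) ^ 2 + (deriv (fun z => S j t z) y) ^ 2) :=
    sum_nonneg fun j _ => mul_nonneg (hε j) <|
      intervalIntegral.integral_nonneg (hx Fin.castSucc_lt_succ).le fun y _ => by positivity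
  linarith

end Energy

theorem dg_RS_dissipative_energy_general
    (N p : ℕ) [NeZero N] (T α β : ℝ)
    (x : Fin (N + 1) → ℝ) (hx : StrictMono x)
    (R S ψ : Fin N → ℝ → ℝ → ℝ)
    (ε : Fin N → ℝ → ℝ) (hε : ∀ j, ∀ t ∈ Set.Icc (0 : ℝ) T, 0 ≤ ε j t)
    (hRreg : ∀ j, ContDiff ℝ 1 (Function.uncurry (R j)))
    (hSreg : ∀ j, ContDiff ℝ 1 (Function.uncurry (S j)))
    (hRpoly : ∀ j t, IsPolyDeg p (R j t))
    (hSpoly : ∀ j t, IsPolyDeg p (S j t))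
    -- scheme equation (i) (the `R`-equation with diffusive flux and
    -- shock-capturing term), for all test functions `φ ∈ X^p_Δx`
    (hscheme1 : ∀ φ : Fin N → Polynomial ℝ, (∀ j, (φ j).natDegree ≤ p) →
      ∀ t ∈ Set.Icc (0 : ℝ) T,
        (∑ j : Fin N, ∫ y in cellL x j..cellR x j,
            deriv (fun s => R j s y) t * (φ j).eval y)
        + (∑ j : Fin N, ∫ y in cellL x j..cellR x j,
            waveC α β (ψ j t y) * R j t y * deriv (fun z => (φ j).eval z) y)
        - (∑ j : Fin N,
            (cbarI α β x ψ t j * avgI x R t j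
              + (1 / 2) * sMaxI α β x ψ t j * jmpI x R t j)
            * (φ j).eval (cellR x j))
        + (∑ j : Fin N,
            (cbarI α β x ψ t (j - 1) * avgI x R t (j - 1)
              + (1 / 2) * sMaxI α β x ψ t (j - 1) * jmpI x R t (j - 1))
            * (φ j).eval (cellL x j))
        =
        (1 / 2) * (∑ j : Fin N, ∫ y in cellL x j..cellR x j,
            waveC α β (ψ j t y) * deriv (fun z => R j t z * (φ j).eval z) y)
        - (1 / 2) * (∑ j : Fin N,
            cbarI α β x ψ t j * trM x R t j * (φ j).eval (cellR x j))
        + (1 / 2) * (∑ j : Fin N,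
            cbarI α β x ψ t (j - 1) * trP x R t (j - 1) * (φ j).eval (cellL x j))
        - (1 / 2) * (∑ j : Fin N, ∫ y in cellL x j..cellR x j,
            waveC α β (ψ j t y) * deriv (fun z => S j t z * (φ j).eval z) y)
        + (1 / 2) * (∑ j : Fin N,
            cbarI α β x ψ t j * trM x S t j * (φ j).eval (cellR x j))
        - (1 / 2) * (∑ j : Fin N,
            cbarI α β x ψ t (j - 1) * trP x S t (j - 1) * (φ j).eval (cellL x j))
        - (∑ j : Fin N, ε j t * ∫ y in cellL x j..cellR x j,
            deriv (fun z => R j t z) y * deriv (fun z => (φ j).eval z) y))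
    -- scheme equation (ii) (the `S`-equation with diffusive flux and
    -- shock-capturing term), for all test functions `η ∈ X^p_Δx`
    (hscheme2 : ∀ η : Fin N → Polynomial ℝ, (∀ j, (η j).natDegree ≤ p) →
      ∀ t ∈ Set.Icc (0 : ℝ) T,
        (∑ j : Fin N, ∫ y in cellL x j..cellR x j,
            deriv (fun s => S j s y) t * (η j).eval y)
        - (∑ j : Fin N, ∫ y in cellL x j..cellR x j,
            waveC α β (ψ j t y) * S j t y * deriv (fun z => (η j).eval z) y)
        + (∑ j : Fin N,
            (cbarI α β x ψ t j * avgI x S t j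
              - (1 / 2) * sMaxI α β x ψ t j * jmpI x S t j)
            * (η j).eval (cellR x j))
        - (∑ j : Fin N,
            (cbarI α β x ψ t (j - 1) * avgI x S t (j - 1)
              - (1 / 2) * sMaxI α β x ψ t (j - 1) * jmpI x S t (j - 1))
            * (η j).eval (cellL x j))
        =
        (1 / 2) * (∑ j : Fin N, ∫ y in cellL x j..cellR x j,
            waveC α β (ψ j t y) * deriv (fun z => R j t z * (η j).eval z) y)
        - (1 / 2) * (∑ j : Fin N,
            cbarI α β x ψ t j * trM x R t j * (η j).eval (cellR x j))
        + (1 / 2) * (∑ j : Fin N,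
            cbarI α β x ψ t (j - 1) * trP x R t (j - 1) * (η j).eval (cellL x j))
        - (1 / 2) * (∑ j : Fin N, ∫ y in cellL x j..cellR x j,
            waveC α β (ψ j t y) * deriv (fun z => S j t z * (η j).eval z) y)
        + (1 / 2) * (∑ j : Fin N,
            cbarI α β x ψ t j * trM x S t j * (η j).eval (cellR x j))
        - (1 / 2) * (∑ j : Fin N,
            cbarI α β x ψ t (j - 1) * trP x S t (j - 1) * (η j).eval (cellL x j))
        - (∑ j : Fin N, ε j t * ∫ y in cellL x j..cellR x j,
            deriv (fun z => S j t z) y * deriv (fun z => (η j).eval z) y)) :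
    ∀ t ∈ Set.Icc (0 : ℝ) T,
      HasDerivAt
        (fun s => ∑ j : Fin N, ∫ y in cellL x j..cellR x j,
          (R j s y ^ 2 + S j s y ^ 2) / 2)
        (-(1 / 2) * (∑ j : Fin N,
            sMaxI α β x ψ t j * (jmpI x R t j ^ 2 + jmpI x S t j ^ 2))
          - ∑ j : Fin N, ε j t * ∫ y in cellL x j..cellR x j,
              ((deriv (fun z => R j t z) y) ^ 2 + (deriv (fun z => S j t z) y) ^ 2))
        t
      ∧ -(1 / 2) * (∑ j : Fin N,
            sMaxI α β x ψ t j * (jmpI x R t j ^ 2 + jmpI x S t j ^ 2))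
          - (∑ j : Fin N, ε j t * ∫ y in cellL x j..cellR x j,
              ((deriv (fun z => R j t z) y) ^ 2 + (deriv (fun z => S j t z) y) ^ 2))
        ≤ 0 := by
  intro t ht
  obtain ⟨qR, hqR_deg, hqR⟩ := IsPolyDeg.exists_eval_eq fun j => hRpoly j t
  obtain ⟨qS, hqS_deg, hqS⟩ := IsPolyDeg.exists_eval_eq fun j => hSpoly j t
  have hR : SchemeEqR α β x R S ψ ε t fun j => R j t := hqR ▸ hscheme1 qR hqR_deg t ht
  have hS : SchemeEqS α β x R S ψ ε t fun j => S j t := hqS ▸ hscheme2 qS hqS_deg t ht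
  have henergy := HasDerivAt.fun_sum fun j (_ : j ∈ univ) =>
    hasDerivAt_intervalIntegral_half_sq_add_sq (hRreg j) (hSreg j) (cellL x j) (cellR x j) t
  rw [energy_balance hR hS (fun j => (hRreg j).apply_of_uncurry t)
    (fun j => (hSreg j).apply_of_uncurry t)] at henergy
  exact ⟨henergy, dissipation_nonpos hx fun j => hε j t ht⟩

/-- energy stability for the semi-discrete energy-dissipative DG
scheme based on the Riemann-invariant (`R,S`) formulation, with periodic
boundary conditions: the discrete energy `t ↦ Σ_j ∫_{Ω_j} (R² + S²)/2 dx`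
has derivative
`−(1/2) Σ_j s_{j+1/2}(⟦R⟧² + ⟦S⟧²) − Σ_j ε_j ∫_{Ω_j} (R_x² + S_x²) dx ≤ 0`. -/
theorem dg_RS_dissipative_energy
    (N p : ℕ) [NeZero N] (T α β : ℝ) (hT : 0 < T) (hα : 0 < α) (hβ : 0 < β)
    (x : Fin (N + 1) → ℝ) (hx : StrictMono x)
    (R S ψ : Fin N → ℝ → ℝ → ℝ)
    (ε : Fin N → ℝ → ℝ) (hε : ∀ j, ∀ t ∈ Set.Icc (0 : ℝ) T, 0 ≤ ε j t)
    (hRreg : ∀ j, ContDiff ℝ 1 (Function.uncurry (R j)))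
    (hSreg : ∀ j, ContDiff ℝ 1 (Function.uncurry (S j)))
    (hψreg : ∀ j, ContDiff ℝ 1 (Function.uncurry (ψ j)))
    (hRpoly : ∀ j t, IsPolyDeg p (R j t))
    (hSpoly : ∀ j t, IsPolyDeg p (S j t))
    (hψpoly : ∀ j t, IsPolyDeg p (ψ j t))
    -- scheme equation (i) (the `R`-equation with diffusive flux and
    -- shock-capturing term), for all test functions `φ ∈ X^p_Δx`
    (hscheme1 : ∀ φ : Fin N → Polynomial ℝ, (∀ j, (φ j).natDegree ≤ p) →
      ∀ t ∈ Set.Icc (0 : ℝ) T,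
        (∑ j : Fin N, ∫ y in cellL x j..cellR x j,
            deriv (fun s => R j s y) t * (φ j).eval y)
        + (∑ j : Fin N, ∫ y in cellL x j..cellR x j,
            waveC α β (ψ j t y) * R j t y * deriv (fun z => (φ j).eval z) y)
        - (∑ j : Fin N,
            (cbarI α β x ψ t j * avgI x R t j
              + (1 / 2) * sMaxI α β x ψ t j * jmpI x R t j)
            * (φ j).eval (cellR x j))
        + (∑ j : Fin N,
            (cbarI α β x ψ t (j - 1) * avgI x R t (j - 1)
              + (1 / 2) * sMaxI α β x ψ t (j - 1) * jmpI x R t (j - 1))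
            * (φ j).eval (cellL x j))
        =
        (1 / 2) * (∑ j : Fin N, ∫ y in cellL x j..cellR x j,
            waveC α β (ψ j t y) * deriv (fun z => R j t z * (φ j).eval z) y)
        - (1 / 2) * (∑ j : Fin N,
            cbarI α β x ψ t j * trM x R t j * (φ j).eval (cellR x j))
        + (1 / 2) * (∑ j : Fin N,
            cbarI α β x ψ t (j - 1) * trP x R t (j - 1) * (φ j).eval (cellL x j))
        - (1 / 2) * (∑ j : Fin N, ∫ y in cellL x j..cellR x j,
            waveC α β (ψ j t y) * deriv (fun z => S j t z * (φ j).eval z) y)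
        + (1 / 2) * (∑ j : Fin N,
            cbarI α β x ψ t j * trM x S t j * (φ j).eval (cellR x j))
        - (1 / 2) * (∑ j : Fin N,
            cbarI α β x ψ t (j - 1) * trP x S t (j - 1) * (φ j).eval (cellL x j))
        - (∑ j : Fin N, ε j t * ∫ y in cellL x j..cellR x j,
            deriv (fun z => R j t z) y * deriv (fun z => (φ j).eval z) y))
    -- scheme equation (ii) (the `S`-equation with diffusive flux and
    -- shock-capturing term), for all test functions `η ∈ X^p_Δx`
    (hscheme2 : ∀ η : Fin N → Polynomial ℝ, (∀ j, (η j).natDegree ≤ p) →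
      ∀ t ∈ Set.Icc (0 : ℝ) T,
        (∑ j : Fin N, ∫ y in cellL x j..cellR x j,
            deriv (fun s => S j s y) t * (η j).eval y)
        - (∑ j : Fin N, ∫ y in cellL x j..cellR x j,
            waveC α β (ψ j t y) * S j t y * deriv (fun z => (η j).eval z) y)
        + (∑ j : Fin N,
            (cbarI α β x ψ t j * avgI x S t j
              - (1 / 2) * sMaxI α β x ψ t j * jmpI x S t j)
            * (η j).eval (cellR x j))
        - (∑ j : Fin N,
            (cbarI α β x ψ t (j - 1) * avgI x S t (j - 1)
              - (1 / 2) * sMaxI α β x ψ t (j - 1) * jmpI x S t (j - 1))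
            * (η j).eval (cellL x j))
        =
        (1 / 2) * (∑ j : Fin N, ∫ y in cellL x j..cellR x j,
            waveC α β (ψ j t y) * deriv (fun z => R j t z * (η j).eval z) y)
        - (1 / 2) * (∑ j : Fin N,
            cbarI α β x ψ t j * trM x R t j * (η j).eval (cellR x j))
        + (1 / 2) * (∑ j : Fin N,
            cbarI α β x ψ t (j - 1) * trP x R t (j - 1) * (η j).eval (cellL x j))
        - (1 / 2) * (∑ j : Fin N, ∫ y in cellL x j..cellR x j,
            waveC α β (ψ j t y) * deriv (fun z => S j t z * (η j).eval z) y)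
        + (1 / 2) * (∑ j : Fin N,
            cbarI α β x ψ t j * trM x S t j * (η j).eval (cellR x j))
        - (1 / 2) * (∑ j : Fin N,
            cbarI α β x ψ t (j - 1) * trP x S t (j - 1) * (η j).eval (cellL x j))
        - (∑ j : Fin N, ε j t * ∫ y in cellL x j..cellR x j,
            deriv (fun z => S j t z) y * deriv (fun z => (η j).eval z) y))
    -- scheme equation (iii) (the `ψ`-equation), for all test functions `ζ ∈ X^p_Δx`
    (hscheme3 : ∀ ζ : Fin N → Polynomial ℝ, (∀ j, (ζ j).natDegree ≤ p) →
      ∀ t ∈ Set.Icc (0 : ℝ) T,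
        (∑ j : Fin N, ∫ y in cellL x j..cellR x j,
            deriv (fun s => ψ j s y) t * (ζ j).eval y)
        = ∑ j : Fin N, ∫ y in cellL x j..cellR x j,
            (R j t y + S j t y) / 2 * (ζ j).eval y) :
    ∀ t ∈ Set.Icc (0 : ℝ) T,
      HasDerivAt
        (fun s => ∑ j : Fin N, ∫ y in cellL x j..cellR x j,
          (R j s y ^ 2 + S j s y ^ 2) / 2)
        (-(1 / 2) * (∑ j : Fin N,
            sMaxI α β x ψ t j * (jmpI x R t j ^ 2 + jmpI x S t j ^ 2))
          - ∑ j : Fin N, ε j t * ∫ y in cellL x j..cellR x j,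
              ((deriv (fun z => R j t z) y) ^ 2 + (deriv (fun z => S j t z) y) ^ 2))
        t
      ∧ -(1 / 2) * (∑ j : Fin N,
            sMaxI α β x ψ t j * (jmpI x R t j ^ 2 + jmpI x S t j ^ 2))
          - (∑ j : Fin N, ε j t * ∫ y in cellL x j..cellR x j,
              ((deriv (fun z => R j t z) y) ^ 2 + (deriv (fun z => S j t z) y) ^ 2))
        ≤ 0 :=
  dg_RS_dissipative_energy_general N p T α β x hx R S ψ ε hε hRreg hSreg hRpoly hSpoly hscheme1
    hscheme2

end
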